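/- arXiv:1002.4529 — 6 statements merged into one kernel-verified Lean document; each statement's English description precedes it below -/
import Mathlib

section
/- Every 3-fold covering of the plane by a finite set of closed half-planes can be decomposed into two coverings: if every point of ℝ² belongs to at least 3 half-planes of a finite family H, then H can be partitioned into two subfamilies each of which covers ℝ². -/
/-- A closed half-plane in `ℝ²`. -/
def IsHalfPlane (h : Set (ℝ × ℝ)) : Prop :=
  ∃ a b c : ℝ, (a, b) ≠ (0, 0) ∧ h = {p : ℝ × ℝ | a * p.1 + b * p.2 ≤ c}

/-!
By Helly's theorem applied to the complements, every finite cover of the plane by half-planes has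
a subcover `C` with at most three members. If `H \ C` does not cover, the 3-fold covering forces a
point `x` lying in exactly the members of `C`. Fix `A ∈ C`; then `insert A (H \ C)` still covers,
hence has a subcover `C'` with at most three members, and `C ∩ C' ⊆ {A}`. If `H \ C'` does not
cover either, some point `y` lies in exactly the members of `C'`. Moving in the direction `y - x`
eventually leaves every member of `C` other than `A`, moving in the direction `x - y` eventually
leaves every member of `C'` other than `A`, and along one of the two directions the linear form
defining `A` does not decrease. Starting such a ray outside `A` produces a point missed by `C` or
by `C'`, a contradiction.
-/

open Set Filter

section Cover

variable {α : Type*} {H C : Set (Set α)}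

theorem sep_mem_eq_of_notMem_sUnion_diff {n : ℕ} {z : α} (hC : C.Finite) (hCn : C.ncard ≤ n)
    (hzn : n ≤ {h ∈ H | z ∈ h}.ncard) (hz : z ∉ ⋃₀ (H \ C)) : {h ∈ H | z ∈ h} = C := by
  refine eq_of_subset_of_ncard_le (fun h ⟨hH, hzh⟩ => ?_) (hCn.trans hzn) hC
  by_contra hhC
  exact hz ⟨h, ⟨hH, hhC⟩, hzh⟩

theorem sUnion_insert_diff_eq_univ {n : ℕ} (hC : C.Finite) (hCn : C.ncard ≤ n)
    (hn : ∀ z, n ≤ {h ∈ H | z ∈ h}.ncard) {A : Set α} (hA : A ∈ C) :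
    ⋃₀ insert A (H \ C) = univ := by
  refine eq_univ_of_forall fun z => ?_
  by_cases hz : z ∈ ⋃₀ (H \ C)
  · exact sUnion_mono (subset_insert _ _) hz
  · have hAz : A ∈ {h ∈ H | z ∈ h} := sep_mem_eq_of_notMem_sUnion_diff hC hCn (hn z) hz ▸ hA
    exact ⟨A, mem_insert _ _, hAz.2⟩

theorem exists_partition_of_sUnion_eq_univ (hCH : C ⊆ H) (hC : ⋃₀ C = univ)
    (hHC : ⋃₀ (H \ C) = univ) :
    ∃ H₁ H₂ : Set (Set α), H₁ ∪ H₂ = H ∧ H₁ ∩ H₂ = ∅ ∧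
      (∀ p, ∃ h ∈ H₁, p ∈ h) ∧ (∀ p, ∃ h ∈ H₂, p ∈ h) :=
  ⟨C, H \ C, union_sdiff_cancel hCH, inter_sdiff_self C H, sUnion_eq_univ_iff.1 hC,
    sUnion_eq_univ_iff.1 hHC⟩

end Cover

theorem exists_subcover_ncard_le_finrank_add_one {E : Type*} [AddCommGroup E] [Module ℝ E]
    [FiniteDimensional ℝ E] {F : Set (Set E)} (hF : F.Finite) (hconv : ∀ h ∈ F, Convex ℝ hᶜ)
    (hcov : ⋃₀ F = univ) : ∃ C ⊆ F, C.ncard ≤ Module.finrank ℝ E + 1 ∧ ⋃₀ C = univ := by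
  classical
  by_contra! hsmall
  obtain ⟨z, hz⟩ := Convex.helly_theorem' (F := compl) (s := hF.toFinset)
    (fun h hh => hconv h (hF.mem_toFinset.1 hh)) fun I hI hIcard => by
      obtain ⟨z, hz⟩ := ne_univ_iff_exists_notMem _ |>.1 <|
        hsmall I (by simpa [Set.subset_def] using hI) (by rwa [ncard_coe_finset])
      exact ⟨z, by simpa using hz⟩
  exact (ne_univ_iff_exists_notMem _).2 ⟨z, by simpa using hz⟩ hcov

namespace IsHalfPlane

theorem convex_compl {h : Set (ℝ × ℝ)} (hh : IsHalfPlane h) : Convex ℝ hᶜ := by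
  obtain ⟨a, b, c, -, rfl⟩ := hh
  simp only [compl_ofPred, not_le]
  exact convex_halfSpace_gt ⟨fun p q => by simp only [Prod.fst_add, Prod.snd_add]; ring,
    fun r p => by simp only [Prod.smul_fst, Prod.smul_snd, smul_eq_mul]; ring⟩ c

theorem exists_subcover_ncard_le_three {F : Set (Set (ℝ × ℝ))} (hF : F.Finite)
    (hFH : ∀ h ∈ F, IsHalfPlane h) (hcov : ⋃₀ F = univ) :
    ∃ C ⊆ F, C.ncard ≤ 3 ∧ ⋃₀ C = univ := by
  simpa using exists_subcover_ncard_le_finrank_add_one hF (fun h hh => (hFH h hh).convex_compl) hcov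

theorem eventually_notMem {B : Set (ℝ × ℝ)} (hB : IsHalfPlane B) {p q : ℝ × ℝ}
    (hp : p ∈ B) (hq : q ∉ B) (o : ℝ × ℝ) : ∀ᶠ t : ℝ in atTop, o + t • (q - p) ∉ B := by
  obtain ⟨a, b, c, -, rfl⟩ := hB
  simp only [mem_ofPred_eq, not_le] at hp hq ⊢
  have hslope : 0 < a * (q - p).1 + b * (q - p).2 := by
    simp only [Prod.fst_sub, Prod.snd_sub]; linarith
  filter_upwards [(tendsto_atTop_add_const_left _ (a * o.1 + b * o.2)
    (tendsto_id.atTop_mul_const hslope)).eventually_gt_atTop c] with t ht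
  simp only [Prod.fst_add, Prod.snd_add, Prod.smul_fst, Prod.smul_snd, smul_eq_mul, id] at ht ⊢
  linarith

end IsHalfPlane

theorem exists_lt_mul_fst_add_mul_snd {a b : ℝ} (hab : (a, b) ≠ (0, 0)) (k : ℝ) :
    ∃ o : ℝ × ℝ, k < a * o.1 + b * o.2 := by
  have hpos : 0 < a * a + b * b := by
    rcases not_and_or.1 (mt Prod.ext_iff.2 hab) with h | h <;>
      nlinarith [mul_self_pos.2 h, mul_self_nonneg a, mul_self_nonneg b]
  obtain ⟨s, hs⟩ := ((tendsto_id.atTop_mul_const hpos).eventually_gt_atTop k).exists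
  exact ⟨s • (a, b), by simp only [Prod.smul_fst, Prod.smul_snd, smul_eq_mul, id] at hs ⊢; linarith⟩

theorem sUnion_insert_ne_univ {a b k : ℝ} (hab : (a, b) ≠ (0, 0)) {F : Set (Set (ℝ × ℝ))}
    (hF : F.Finite) (hFH : ∀ h ∈ F, IsHalfPlane h) {p q : ℝ × ℝ} (hp : ∀ h ∈ F, p ∈ h)
    (hq : ∀ h ∈ F, q ∉ h) (hpq : a * p.1 + b * p.2 ≤ a * q.1 + b * q.2) :
    ⋃₀ insert {z : ℝ × ℝ | a * z.1 + b * z.2 ≤ k} F ≠ univ := by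
  obtain ⟨o, ho⟩ := exists_lt_mul_fst_add_mul_snd hab k
  have hA : ∀ t : ℝ, 0 ≤ t → k < a * (o + t • (q - p)).1 + b * (o + t • (q - p)).2 := by
    intro t ht
    simp only [Prod.fst_add, Prod.snd_add, Prod.smul_fst, Prod.smul_snd, Prod.fst_sub,
      Prod.snd_sub, smul_eq_mul]
    nlinarith
  obtain ⟨t, ht, htF⟩ := ((eventually_ge_atTop 0).and <| (eventually_all_finite hF).2
    fun h hh => (hFH h hh).eventually_notMem (hp h hh) (hq h hh) o).exists
  refine (ne_univ_iff_exists_notMem _).2 ⟨o + t • (q - p), ?_⟩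
  rintro ⟨h, rfl | hh, hmem⟩
  · exact (hA t ht).not_ge hmem
  · exact htF h hh hmem

theorem sUnion_ne_univ_of_inter_subset_singleton {H C C' : Set (Set (ℝ × ℝ))} {a b k : ℝ}
    (hab : (a, b) ≠ (0, 0)) (hH : ∀ h ∈ H, IsHalfPlane h) (hC : C.Finite) (hCH : C ⊆ H)
    (hCC' : C ∩ C' ⊆ {{z : ℝ × ℝ | a * z.1 + b * z.2 ≤ k}}) {x y : ℝ × ℝ}
    (hx : ∀ h ∈ C, x ∈ h) (hy : {h ∈ H | y ∈ h} ⊆ C')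
    (hxy : a * x.1 + b * x.2 ≤ a * y.1 + b * y.2) : ⋃₀ C ≠ univ := fun hcov =>
  sUnion_insert_ne_univ hab hC.sdiff (fun h hh => hH h (hCH hh.1)) (fun h hh => hx h hh.1)
    (fun _ hh hyh => hh.2 (hCC' ⟨hh.1, hy ⟨hCH hh.1, hyh⟩⟩)) hxy
    (univ_subset_iff.1 (hcov ▸ sUnion_mono (subset_insert_sdiff_singleton _ _)))

theorem sep_mem_ne_of_inter_subset_singleton {H C C' : Set (Set (ℝ × ℝ))} {A : Set (ℝ × ℝ)}
    (hfin : H.Finite) (hH : ∀ h ∈ H, IsHalfPlane h) (hA : IsHalfPlane A) (hCH : C ⊆ H)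
    (hC'H : C' ⊆ H) (hC : ⋃₀ C = univ) (hC' : ⋃₀ C' = univ) (hCC' : C ∩ C' ⊆ {A})
    {x y : ℝ × ℝ} (hx : {h ∈ H | x ∈ h} = C) : {h ∈ H | y ∈ h} ≠ C' := by
  rintro hy
  obtain ⟨a, b, k, hab, rfl⟩ := hA
  rcases le_total (a * x.1 + b * x.2) (a * y.1 + b * y.2) with hxy | hyx
  · exact sUnion_ne_univ_of_inter_subset_singleton hab hH (hfin.subset hCH) hCH hCC'
      (fun _ hh => (hx.ge hh).2) hy.le hxy hC
  · exact sUnion_ne_univ_of_inter_subset_singleton hab hH (hfin.subset hC'H) hC'H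
      (inter_comm C C' ▸ hCC') (fun _ hh => (hy.ge hh).2) hx.le hyx hC'

/-- Every 3-fold covering of the plane by a finite set of closed half-planes
decomposes into two coverings. -/
theorem threefold_cover_decomposes
    (H : Set (Set (ℝ × ℝ))) (hfin : H.Finite) (hH : ∀ h ∈ H, IsHalfPlane h)
    (hcov : ∀ p : ℝ × ℝ, 3 ≤ {h ∈ H | p ∈ h}.ncard) :
    ∃ H₁ H₂ : Set (Set (ℝ × ℝ)),
      H₁ ∪ H₂ = H ∧ H₁ ∩ H₂ = ∅ ∧
      (∀ p : ℝ × ℝ, ∃ h ∈ H₁, p ∈ h) ∧ (∀ p : ℝ × ℝ, ∃ h ∈ H₂, p ∈ h) := by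
  have hHcov : ⋃₀ H = univ :=
    sUnion_eq_univ_iff.2 fun p => nonempty_of_ncard_ne_zero (zero_lt_three.trans_le (hcov p)).ne'
  obtain ⟨C, hCH, hC3, hC⟩ := IsHalfPlane.exists_subcover_ncard_le_three hfin hH hHcov
  by_cases hHC : ⋃₀ (H \ C) = univ
  · exact exists_partition_of_sUnion_eq_univ hCH hC hHC
  obtain ⟨x, hx⟩ := (ne_univ_iff_exists_notMem _).1 hHC
  obtain ⟨A, hAC⟩ : C.Nonempty := nonempty_sUnion.1 (hC ▸ univ_nonempty) |>.imp fun _ h => h.1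
  have hC'sub : insert A (H \ C) ⊆ H := insert_subset (hCH hAC) sdiff_subset
  obtain ⟨C', hC'A, hC'3, hC'⟩ := IsHalfPlane.exists_subcover_ncard_le_three
    (hfin.subset hC'sub) (fun h hh => hH h (hC'sub hh))
    (sUnion_insert_diff_eq_univ (hfin.subset hCH) hC3 hcov hAC)
  have hC'H : C' ⊆ H := hC'A.trans hC'sub
  have hCC' : C ∩ C' ⊆ {A} := fun h ⟨hhC, hhC'⟩ =>
    (hC'A hhC').resolve_right fun hh => hh.2 hhC
  refine exists_partition_of_sUnion_eq_univ hC'H hC' (by_contra fun hHC' => ?_)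
  obtain ⟨y, hy⟩ := (ne_univ_iff_exists_notMem _).1 hHC'
  exact sep_mem_ne_of_inter_subset_singleton hfin hH (hH A (hCH hAC)) hCH hC'H hC hC' hCC'
    (sep_mem_eq_of_notMem_sUnion_diff (hfin.subset hCH) hC3 (hcov x) hx)
    (sep_mem_eq_of_notMem_sUnion_diff (hfin.subset hC'H) hC'3 (hcov y) hy)
end

section
/- There exists a finite set of closed half-planes H and an assignment of every 2-coloring of H to a monochromatic point: for every 2-coloring of H there is a point covered by at least two half-planes of H all of the same color. Equivalently, the '2-fold' version of the half-plane coloring theorem fails: the chromatic number of the hypergraph whose hyperedges are the sets of half-planes covering points of depth at least 2 can be 3. -/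
section Triangle

variable {α : Type*} {A B C : Set α}

lemma corner_monochromatic {a : α} (haA : a ∉ A) (haB : a ∈ B) (haC : a ∈ C) (hBC : B ≠ C)
    {χ : Set α → Bool} (hχ : χ B = χ C) :
    2 ≤ {h ∈ ({A, B, C} : Set (Set α)) | a ∈ h}.ncard ∧
      ∃ c : Bool, ∀ h ∈ ({A, B, C} : Set (Set α)), a ∈ h → χ h = c := by
  have hcorner : {h ∈ ({A, B, C} : Set (Set α)) | a ∈ h} = {B, C} := by
    ext h
    simp only [Set.mem_ofPred_eq, Set.mem_insert_iff, Set.mem_singleton_iff]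
    constructor
    · rintro ⟨rfl | rfl | rfl, hm⟩
      exacts [absurd hm haA, .inl rfl, .inr rfl]
    · rintro (rfl | rfl)
      exacts [⟨.inr (.inl rfl), haB⟩, ⟨.inr (.inr rfl), haC⟩]
  refine ⟨by rw [hcorner, Set.ncard_pair hBC], χ B, ?_⟩
  rintro h (rfl | rfl | rfl) hm
  exacts [absurd hm haA, rfl, hχ.symm]

lemma Bool.eq_or_eq_or_eq (x y z : Bool) : y = z ∨ x = z ∨ x = y := by
  cases x <;> cases y <;> cases z <;> simp

theorem exists_monochromatic_of_triangle {a b c : α}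
    (haA : a ∉ A) (haB : a ∈ B) (haC : a ∈ C)
    (hbA : b ∈ A) (hbB : b ∉ B) (hbC : b ∈ C)
    (hcA : c ∈ A) (hcB : c ∈ B) (hcC : c ∉ C) (χ : Set α → Bool) :
    ∃ p : α, 2 ≤ {h ∈ ({A, B, C} : Set (Set α)) | p ∈ h}.ncard ∧
      ∃ c : Bool, ∀ h ∈ ({A, B, C} : Set (Set α)), p ∈ h → χ h = c := by
  have hne {X Y : Set α} {x : α} (hX : x ∈ X) (hY : x ∉ Y) : X ≠ Y := fun h => hY (h ▸ hX)
  rcases Bool.eq_or_eq_or_eq (χ A) (χ B) (χ C) with hχ | hχ | hχ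
  · exact ⟨a, corner_monochromatic haA haB haC (hne hcB hcC) hχ⟩
  · refine ⟨b, ?_⟩
    rw [Set.insert_comm A B]
    exact corner_monochromatic hbB hbA hbC (hne hcA hcC) hχ
  · refine ⟨c, ?_⟩
    rw [Set.pair_comm B C, Set.insert_comm A C]
    exact corner_monochromatic hcC hcA hcB (hne hbA hbB) hχ

end Triangle

def halfPlane (a b c : ℝ) : Set (ℝ × ℝ) := {p | a * p.1 + b * p.2 ≤ c}

lemma isHalfPlane_halfPlane {a b : ℝ} (hab : (a, b) ≠ (0, 0)) (c : ℝ) :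
    IsHalfPlane (halfPlane a b c) :=
  ⟨a, b, c, hab, rfl⟩

/-- The depth-2 version of the half-plane 2-coloring theorem fails: there is a
finite set of closed half-planes such that for every 2-coloring some point of
depth at least 2 is covered only by half-planes of one color. -/
theorem depth_two_coloring_fails :
    ∃ H : Set (Set (ℝ × ℝ)), H.Finite ∧ (∀ h ∈ H, IsHalfPlane h) ∧
      ∀ χ : Set (ℝ × ℝ) → Bool,
        ∃ p : ℝ × ℝ, 2 ≤ {h ∈ H | p ∈ h}.ncard ∧
          ∃ c : Bool, ∀ h ∈ H, p ∈ h → χ h = c := by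
  refine ⟨{halfPlane 1 0 0, halfPlane 0 1 0, halfPlane (-1) (-1) (-2)}, Set.toFinite _, ?_,
    exists_monochromatic_of_triangle (a := (2, 0)) (b := (0, 2)) (c := (0, 0)) ?_ ?_ ?_ ?_ ?_ ?_
      ?_ ?_ ?_⟩
  · rintro h (rfl | rfl | rfl) <;> exact isHalfPlane_halfPlane (by norm_num) _
  all_goals norm_num [halfPlane]
end

section
/- If the lower convex hull of a finite point set P_L and the upper convex hull of a finite point set P_U in ℝ² intersect, then either some point of P_U lies in the lower convex hull of P_L, or some point of P_L lies in the upper convex hull of P_U. -/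
/-- The upper convex hull of a planar point set: the convex hull of the union of
downward vertical rays emanating from the points. -/
def uphull (P : Set (ℝ × ℝ)) : Set (ℝ × ℝ) :=
  convexHull ℝ {x : ℝ × ℝ | ∃ p ∈ P, ∃ t : ℝ, 0 ≤ t ∧ x = p - t • ((0 : ℝ), (1 : ℝ))}

/-- The lower convex hull: the convex hull of the union of upward vertical rays. -/
def lowhull (P : Set (ℝ × ℝ)) : Set (ℝ × ℝ) :=
  convexHull ℝ {x : ℝ × ℝ | ∃ p ∈ P, ∃ t : ℝ, 0 ≤ t ∧ x = p + t • ((0 : ℝ), (1 : ℝ))}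

/-!
Say that `u` is below `v` when both lie on one vertical line with `u` lower. Then `lowhull P` is
the set of points above some point of `conv P`, and `uphull P` the set of points below some point
of `conv P`; so we are given `u ∈ conv P_L` below `v ∈ conv P_U`, and we induct on the two sets.
A point of `conv (insert p s)` is `p` or lies on a segment `[p, u']` with `u' ∈ conv s`, which
reduces everything to two segments `[a, b] ∋ u` and `[c, d] ∋ v`. Over the common x-range of the
segments the height of `[c, d]` minus the height of `[a, b]` is affine and nonnegative at `u.1`,
hence nonnegative at an end of that range, which is the abscissa of one of `a, b, c, d`. So one
of these four endpoints is above a point of the other segment, or below one. With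
`[a, b] = [p, u']` and `[c, d] = [q, v']`, that endpoint is either `p` or `q`, which is then in the
required hull, or `u'` or `v'`, and we recurse on the smaller set.
-/

open Set
open scoped Pointwise

theorem segment_subset_convexHull_insert {𝕜 E : Type*} [Semiring 𝕜] [PartialOrder 𝕜]
    [AddCommMonoid E] [Module 𝕜 E] {s : Set E} (p : E) {u : E} (hu : u ∈ convexHull 𝕜 s) :
    segment 𝕜 p u ⊆ convexHull 𝕜 (insert p s) :=
  (convex_convexHull 𝕜 _).segment_subset (subset_convexHull 𝕜 _ (mem_insert p s))
    (convexHull_mono (subset_insert p s) hu)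

section ConvexHull

variable {𝕜 E : Type*} [Field 𝕜] [LinearOrder 𝕜] [IsStrictOrderedRing 𝕜] [AddCommGroup E]
  [Module 𝕜 E]

theorem eq_or_mem_segment_of_mem_convexHull_insert {s : Set E} {p u : E}
    (hu : u ∈ convexHull 𝕜 (insert p s)) : u = p ∨ ∃ u' ∈ convexHull 𝕜 s, u ∈ segment 𝕜 p u' := by
  rcases s.eq_empty_or_nonempty with rfl | hs
  · simpa using hu
  · rw [convexHull_insert hs, mem_convexJoin] at hu
    obtain ⟨_, rfl, u', hu', hseg⟩ := hu
    exact Or.inr ⟨u', hu', hseg⟩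

theorem convexHull_setOf_add_smul (P : Set E) (e : E) :
    convexHull 𝕜 {x | ∃ p ∈ P, ∃ t : 𝕜, 0 ≤ t ∧ x = p + t • e} =
      convexHull 𝕜 P + (· • e) '' Ici (0 : 𝕜) := by
  have hray : Convex 𝕜 ((· • e) '' Ici (0 : 𝕜)) :=
    (convex_Ici 0).linear_image (LinearMap.id.smulRight e)
  rw [← hray.convexHull_eq, ← convexHull_add]
  congr 1
  ext x
  simp only [mem_ofPred_eq, mem_add, mem_image, mem_Ici]
  constructor
  · rintro ⟨p, hp, t, ht, rfl⟩
    exact ⟨p, hp, _, ⟨t, ht, rfl⟩, rfl⟩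
  · rintro ⟨p, hp, _, ⟨t, ht, rfl⟩, rfl⟩
    exact ⟨p, hp, t, ht, rfl⟩

end ConvexHull

def IsBelow (x y : ℝ × ℝ) : Prop := x.1 = y.1 ∧ x.2 ≤ y.2

theorem IsBelow.trans {x y z : ℝ × ℝ} (hxy : IsBelow x y) (hyz : IsBelow y z) : IsBelow x z :=
  ⟨hxy.1.trans hyz.1, hxy.2.trans hyz.2⟩

theorem isBelow_iff_exists_add_smul {x y : ℝ × ℝ} :
    IsBelow x y ↔ ∃ t : ℝ, 0 ≤ t ∧ x + t • ((0 : ℝ), (1 : ℝ)) = y := by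
  refine ⟨fun h => ⟨y.2 - x.2, sub_nonneg.2 h.2, ?_⟩, ?_⟩
  · ext <;> simp [h.1]
  · rintro ⟨t, ht, rfl⟩
    exact ⟨by simp, by simpa using ht⟩

theorem mem_lowhull_iff {P : Set (ℝ × ℝ)} {x : ℝ × ℝ} :
    x ∈ lowhull P ↔ ∃ u ∈ convexHull ℝ P, IsBelow u x := by
  rw [lowhull, convexHull_setOf_add_smul]
  simp only [mem_add, mem_image, mem_Ici, isBelow_iff_exists_add_smul]
  constructor
  · rintro ⟨u, hu, _, ⟨t, ht, rfl⟩, rfl⟩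
    exact ⟨u, hu, t, ht, rfl⟩
  · rintro ⟨u, hu, t, ht, rfl⟩
    exact ⟨u, hu, _, ⟨t, ht, rfl⟩, rfl⟩

theorem mem_uphull_iff {P : Set (ℝ × ℝ)} {x : ℝ × ℝ} :
    x ∈ uphull P ↔ ∃ v ∈ convexHull ℝ P, IsBelow x v := by
  simp only [uphull, sub_eq_add_neg, ← smul_neg]
  rw [convexHull_setOf_add_smul]
  simp only [mem_add, mem_image, mem_Ici, isBelow_iff_exists_add_smul]
  constructor
  · rintro ⟨v, hv, _, ⟨t, ht, rfl⟩, rfl⟩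
    exact ⟨v, hv, t, ht, by ext <;> simp⟩
  · rintro ⟨v, hv, t, ht, rfl⟩
    exact ⟨_, hv, _, ⟨t, ht, rfl⟩, by ext <;> simp⟩

theorem lowhull_mono {s t : Set (ℝ × ℝ)} (h : s ⊆ t) : lowhull s ⊆ lowhull t :=
  convexHull_mono fun _ ⟨p, hp, τ, hτ, hx⟩ => ⟨p, h hp, τ, hτ, hx⟩

theorem uphull_mono {s t : Set (ℝ × ℝ)} (h : s ⊆ t) : uphull s ⊆ uphull t :=
  convexHull_mono fun _ ⟨p, hp, τ, hτ, hx⟩ => ⟨p, h hp, τ, hτ, hx⟩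

noncomputable def lineHeight (a b : ℝ × ℝ) (x : ℝ) : ℝ :=
  a.2 + (x - a.1) * ((b.2 - a.2) / (b.1 - a.1))

theorem mem_segment_iff_lineHeight {a b z : ℝ × ℝ} (hab : a.1 < b.1) :
    z ∈ segment ℝ a b ↔ z.1 ∈ Icc a.1 b.1 ∧ z.2 = lineHeight a b z.1 := by
  have hne : b.1 - a.1 ≠ 0 := (sub_pos.2 hab).ne'
  constructor
  · intro hz
    refine ⟨segment_eq_Icc hab.le ▸ (Prod.segment_subset a b hz).1, ?_⟩
    obtain ⟨σ, τ, -, -, hστ, rfl⟩ := hz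
    obtain rfl : σ = 1 - τ := by linarith
    simp only [Prod.fst_add, Prod.snd_add, Prod.smul_fst, Prod.smul_snd, smul_eq_mul, lineHeight]
    field_simp
    ring
  · rintro ⟨⟨h₁, h₂⟩, hz⟩
    set τ := (z.1 - a.1) / (b.1 - a.1)
    have hτ : τ ≤ 1 := (div_le_one (sub_pos.2 hab)).2 (by linarith)
    refine ⟨1 - τ, τ, by linarith, div_nonneg (by linarith) (by linarith), by ring, ?_⟩
    ext
    · simp only [Prod.fst_add, Prod.smul_fst, smul_eq_mul, τ]
      field_simp
      ring
    · simp only [Prod.snd_add, Prod.smul_snd, smul_eq_mul, hz, lineHeight, τ]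
      ring

theorem lineHeight_sub_lineHeight (a b : ℝ × ℝ) (x y : ℝ) :
    lineHeight a b x - lineHeight a b y = (x - y) * ((b.2 - a.2) / (b.1 - a.1)) := by
  simp only [lineHeight]; ring

theorem lineHeight_fst_of_mem_segment {a b z : ℝ × ℝ} (hab : a.1 < b.1) (hz : z ∈ segment ℝ a b) :
    lineHeight a b z.1 = z.2 :=
  ((mem_segment_iff_lineHeight hab).1 hz).2.symm

theorem exists_isBelow_of_mem_segment_of_fst_lt {a b c d w w' : ℝ × ℝ} (hab : a.1 < b.1)
    (hcd : c.1 < d.1) (hw : w ∈ segment ℝ a b) (hw' : w' ∈ segment ℝ c d) (h : IsBelow w w') :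
    (∃ z ∈ segment ℝ a b, IsBelow z c ∨ IsBelow z d) ∨
      (∃ z ∈ segment ℝ c d, IsBelow a z ∨ IsBelow b z) := by
  set gap := fun x => lineHeight c d x - lineHeight a b x
  have hmeet : ∀ x ∈ Icc (max a.1 c.1) (min b.1 d.1), 0 ≤ gap x →
      (x, lineHeight a b x) ∈ segment ℝ a b ∧ (x, lineHeight c d x) ∈ segment ℝ c d ∧
        lineHeight a b x ≤ lineHeight c d x := by
    rintro x ⟨hlo, hhi⟩ hx
    rw [mem_segment_iff_lineHeight hab, mem_segment_iff_lineHeight hcd]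
    exact ⟨⟨⟨le_of_max_le_left hlo, le_of_le_min_left hhi⟩, rfl⟩,
      ⟨⟨le_of_max_le_right hlo, le_of_le_min_right hhi⟩, rfl⟩, sub_nonneg.1 hx⟩
  rw [mem_segment_iff_lineHeight hab] at hw
  rw [mem_segment_iff_lineHeight hcd] at hw'
  have hwlo : max a.1 c.1 ≤ w.1 := max_le hw.1.1 (h.1 ▸ hw'.1.1)
  have hwhi : w.1 ≤ min b.1 d.1 := le_min hw.1.2 (h.1 ▸ hw'.1.2)
  have hgap : 0 ≤ gap w.1 := by
    simp only [gap]; rw [← hw.2, h.1, ← hw'.2]; exact sub_nonneg.2 h.2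
  -- `gap` is affine, so it is nonnegative at one end of the common x-range
  have hend : 0 ≤ gap (max a.1 c.1) ∨ 0 ≤ gap (min b.1 d.1) := by
    set k := (d.2 - c.2) / (d.1 - c.1) - (b.2 - a.2) / (b.1 - a.1)
    have hslope : ∀ x, gap x - gap w.1 = (x - w.1) * k := fun x => by
      linear_combination lineHeight_sub_lineHeight c d x w.1 - lineHeight_sub_lineHeight a b x w.1
    rcases le_total k 0 with hk | hk
    · exact Or.inl (by nlinarith [hslope (max a.1 c.1)])
    · exact Or.inr (by nlinarith [hslope (min b.1 d.1)])
  rcases hend with hend | hend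
  · obtain ⟨hz, hz', hle⟩ := hmeet _ ⟨le_rfl, hwlo.trans hwhi⟩ hend
    rcases max_choice a.1 c.1 with hlo | hlo <;> rw [hlo] at hz hz' hle
    · rw [lineHeight_fst_of_mem_segment hab (left_mem_segment ℝ a b)] at hle
      exact Or.inr ⟨_, hz', Or.inl ⟨rfl, hle⟩⟩
    · rw [lineHeight_fst_of_mem_segment hcd (left_mem_segment ℝ c d)] at hle
      exact Or.inl ⟨_, hz, Or.inl ⟨rfl, hle⟩⟩
  · obtain ⟨hz, hz', hle⟩ := hmeet _ ⟨hwlo.trans hwhi, le_rfl⟩ hend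
    rcases min_choice b.1 d.1 with hhi | hhi <;> rw [hhi] at hz hz' hle
    · rw [lineHeight_fst_of_mem_segment hab (right_mem_segment ℝ a b)] at hle
      exact Or.inr ⟨_, hz', Or.inr ⟨rfl, hle⟩⟩
    · rw [lineHeight_fst_of_mem_segment hcd (right_mem_segment ℝ c d)] at hle
      exact Or.inl ⟨_, hz, Or.inr ⟨rfl, hle⟩⟩

theorem isBelow_left_or_right_of_fst_eq {a b z : ℝ × ℝ} (hab : a.1 = b.1)
    (hz : z ∈ segment ℝ a b) : IsBelow z a ∨ IsBelow z b := by
  obtain ⟨h₁, h₂⟩ := Prod.segment_subset a b hz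
  rw [← hab, segment_same, mem_singleton_iff] at h₁
  rcases le_max_iff.1 (segment_subset_uIcc _ _ h₂).2 with h | h
  · exact Or.inl ⟨h₁, h⟩
  · exact Or.inr ⟨h₁.trans hab, h⟩

theorem left_or_right_isBelow_of_fst_eq {a b z : ℝ × ℝ} (hab : a.1 = b.1)
    (hz : z ∈ segment ℝ a b) : IsBelow a z ∨ IsBelow b z := by
  obtain ⟨h₁, h₂⟩ := Prod.segment_subset a b hz
  rw [← hab, segment_same, mem_singleton_iff] at h₁
  rcases min_le_iff.1 (segment_subset_uIcc _ _ h₂).1 with h | h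
  · exact Or.inl ⟨h₁.symm, h⟩
  · exact Or.inr ⟨hab.symm.trans h₁.symm, h⟩

theorem exists_isBelow_of_mem_segment {a b c d w w' : ℝ × ℝ}
    (hw : w ∈ segment ℝ a b) (hw' : w' ∈ segment ℝ c d) (h : IsBelow w w') :
    (∃ z ∈ segment ℝ a b, IsBelow z c ∨ IsBelow z d) ∨
      (∃ z ∈ segment ℝ c d, IsBelow a z ∨ IsBelow b z) := by
  rcases eq_or_ne a.1 b.1 with hab | hab
  · exact Or.inr ⟨w', hw', (left_or_right_isBelow_of_fst_eq hab hw).imp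
      (fun haw => haw.trans h) (fun hbw => hbw.trans h)⟩
  rcases eq_or_ne c.1 d.1 with hcd | hcd
  · exact Or.inl ⟨w, hw, (isBelow_left_or_right_of_fst_eq hcd hw').imp
      (fun hwc => h.trans hwc) (fun hwd => h.trans hwd)⟩
  wlog hab' : a.1 < b.1 generalizing a b
  · rw [segment_symm] at hw
    rcases this hw hab.symm (hab.symm.lt_of_le (not_lt.1 hab')) with ⟨z, hz, hzc⟩ | ⟨z, hz, hzab⟩
    · exact Or.inl ⟨z, segment_symm ℝ a b ▸ hz, hzc⟩
    · exact Or.inr ⟨z, hz, hzab.symm⟩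
  wlog hcd' : c.1 < d.1 generalizing c d
  · rw [segment_symm] at hw'
    rcases this hw' hcd.symm (hcd.symm.lt_of_le (not_lt.1 hcd')) with ⟨z, hz, hzcd⟩ | ⟨z, hz, hab⟩
    · exact Or.inl ⟨z, hz, hzcd.symm⟩
    · exact Or.inr ⟨z, segment_symm ℝ c d ▸ hz, hab⟩
  exact exists_isBelow_of_mem_segment_of_fst_lt hab' hcd' hw hw' h

theorem exists_mem_lowhull_or_mem_uphull {s t : Set (ℝ × ℝ)} (hs : s.Finite) (ht : t.Finite)
    {u v : ℝ × ℝ} (hu : u ∈ convexHull ℝ s) (hv : v ∈ convexHull ℝ t) (huv : IsBelow u v) :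
    (∃ q ∈ t, q ∈ lowhull s) ∨ (∃ p ∈ s, p ∈ uphull t) := by
  induction s, hs using Set.Finite.induction_on generalizing t u v with
  | empty => simp at hu
  | @insert p s _ _ ihs =>
    induction t, ht using Set.Finite.induction_on generalizing u v with
    | empty => simp at hv
    | @insert q t _ ht iht =>
      rcases eq_or_mem_segment_of_mem_convexHull_insert hu with rfl | ⟨u', hu', hpu'⟩
      · exact Or.inr ⟨u, mem_insert u s, mem_uphull_iff.2 ⟨v, hv, huv⟩⟩
      rcases eq_or_mem_segment_of_mem_convexHull_insert hv with rfl | ⟨v', hv', hqv'⟩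
      · exact Or.inl ⟨v, mem_insert v t, mem_lowhull_iff.2 ⟨u, hu, huv⟩⟩
      have hsegs := segment_subset_convexHull_insert p hu'
      have hsegt := segment_subset_convexHull_insert q hv'
      rcases exists_isBelow_of_mem_segment hpu' hqv' huv with
        ⟨z, hz, hzq | hzv'⟩ | ⟨z, hz, hpz | hu'z⟩
      · exact Or.inl ⟨q, mem_insert q t, mem_lowhull_iff.2 ⟨z, hsegs hz, hzq⟩⟩
      · exact (iht (hsegs hz) hv' hzv').imp
          (fun ⟨q', hq', h⟩ => ⟨q', mem_insert_of_mem q hq', h⟩)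
          (fun ⟨p', hp', h⟩ => ⟨p', hp', uphull_mono (subset_insert q t) h⟩)
      · exact Or.inr ⟨p, mem_insert p s, mem_uphull_iff.2 ⟨z, hsegt hz, hpz⟩⟩
      · exact (ihs (ht.insert q) hu' (hsegt hz) hu'z).imp
          (fun ⟨q', hq', h⟩ => ⟨q', hq', lowhull_mono (subset_insert p s) h⟩)
          (fun ⟨p', hp', h⟩ => ⟨p', mem_insert_of_mem p hp', h⟩)

/-- If the lower hull of `P_L` and the upper hull of `P_U` intersect, then a point
of `P_U` lies in the lower hull of `P_L` or a point of `P_L` lies in the upper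
hull of `P_U`. -/
theorem hulls_intersect_point_in_hull
    (PL PU : Set (ℝ × ℝ)) (hPL : PL.Finite) (hPU : PU.Finite)
    (h : (lowhull PL ∩ uphull PU).Nonempty) :
    (∃ q ∈ PU, q ∈ lowhull PL) ∨ (∃ q ∈ PL, q ∈ uphull PU) := by
  obtain ⟨z, hzL, hzU⟩ := h
  obtain ⟨u, hu, huz⟩ := mem_lowhull_iff.1 hzL
  obtain ⟨v, hv, hzv⟩ := mem_uphull_iff.1 hzU
  exact exists_mem_lowhull_or_mem_uphull hPL hPU hu hv (huz.trans hzv)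
end

section
/- Reduction via polar duality when a point is uncovered: suppose a finite family H of closed half-planes does not cover the origin. Let P_o be the set of polar duals of the boundary lines of the half-planes (the line ax+by = 1 dualizes to the point (a,b)), and let L_o be the set of segments from the origin o to points of P_o. If the points P_o admit a 2-coloring in which every closed half-plane containing at least three points of P_o contains both colors, then assigning each segment op the color of p gives a 2-coloring of L_o such that every line intersecting at least three segments of L_o intersects segments of both colors. -/
/-- A line in `ℝ²`. -/
def IsLine (l : Set (ℝ × ℝ)) : Prop :=
  ∃ a b c : ℝ, (a, b) ≠ (0, 0) ∧ l = {p : ℝ × ℝ | a * p.1 + b * p.2 = c}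

theorem LinearMap.inter_segment_zero_nonempty_iff {E : Type*} [AddCommGroup E] [Module ℝ E]
    (f : E →ₗ[ℝ] ℝ) (c : ℝ) (q : E) :
    ({x | f x = c} ∩ segment ℝ 0 q).Nonempty ↔ c ^ 2 ≤ c * f q := by
  simp only [segment_eq_image', sub_zero, zero_add, Set.inter_nonempty, Set.mem_image,
    Set.mem_ofPred_eq]
  constructor
  · rintro ⟨_, rfl, t, ⟨ht0, ht1⟩, rfl⟩
    rw [map_smul, smul_eq_mul]
    nlinarith [mul_nonneg (mul_nonneg ht0 (sub_nonneg.2 ht1)) (sq_nonneg (f q))]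
  · intro hc
    rcases eq_or_ne c 0 with rfl | hc0
    · exact ⟨0, map_zero f, 0, ⟨le_rfl, zero_le_one⟩, zero_smul ℝ q⟩
    have hpos : 0 < c * f q := (sq_pos_of_ne_zero hc0).trans_le hc
    have hfq : f q ≠ 0 := right_ne_zero_of_mul hpos.ne'
    have ht : c / f q = c ^ 2 / (c * f q) := by field_simp
    refine ⟨(c / f q) • q, ?_, c / f q, ⟨?_, ?_⟩, rfl⟩
    · rw [map_smul, smul_eq_mul, div_mul_cancel₀ c hfq]
    · rw [ht]; exact div_nonneg (sq_nonneg c) hpos.le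
    · rw [ht]; exact div_le_one_of_le₀ hc hpos.le

theorem IsLine.exists_isHalfPlane_inter_eq {l : Set (ℝ × ℝ)} (hl : IsLine l) (P : Set (ℝ × ℝ))
    (hfin : {q ∈ P | (l ∩ segment ℝ (0, 0) q).Nonempty}.Finite) :
    ∃ h, IsHalfPlane h ∧ h ∩ P = {q ∈ P | (l ∩ segment ℝ (0, 0) q).Nonempty} := by
  obtain ⟨a, b, c, hab, rfl⟩ := hl
  have hmeets (q : ℝ × ℝ) :
      ({p : ℝ × ℝ | a * p.1 + b * p.2 = c} ∩ segment ℝ (0, 0) q).Nonempty ↔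
        c ^ 2 ≤ c * (a * q.1 + b * q.2) :=
    (a • LinearMap.fst ℝ ℝ ℝ + b • LinearMap.snd ℝ ℝ ℝ).inter_segment_zero_nonempty_iff c q
  simp only [hmeets] at hfin ⊢
  rcases eq_or_ne c 0 with rfl | hc0
  · simp only [zero_pow two_ne_zero, zero_mul, le_refl, and_true, Set.ofPred_mem_eq] at hfin ⊢
    obtain ⟨M, hM⟩ := (hfin.image Prod.fst).bddAbove
    refine ⟨{p | 1 * p.1 + 0 * p.2 ≤ M}, ⟨1, 0, M, by simp, rfl⟩, ?_⟩
    exact Set.inter_eq_right.2 fun q hq => by simpa using hM ⟨q, hq, rfl⟩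
  · refine ⟨{p | -c * a * p.1 + -c * b * p.2 ≤ -c ^ 2}, ⟨-c * a, -c * b, -c ^ 2, ?_, rfl⟩, ?_⟩
    · simpa [hc0] using hab
    · refine Set.ext fun q => and_comm.trans (and_congr_right fun _ => ?_)
      simp only [Set.mem_ofPred_eq]
      constructor <;> intro <;> linarith

theorem polar_duality_reduction_general
    (P : Set (ℝ × ℝ))
    (χ : ℝ × ℝ → Bool)
    (hχ : ∀ h : Set (ℝ × ℝ), IsHalfPlane h → 3 ≤ (h ∩ P).ncard →
      (∃ q ∈ h ∩ P, χ q = true) ∧ (∃ q ∈ h ∩ P, χ q = false)) :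
    ∀ l : Set (ℝ × ℝ), IsLine l →
      3 ≤ {q ∈ P | (l ∩ segment ℝ ((0 : ℝ), (0 : ℝ)) q).Nonempty}.ncard →
      (∃ q ∈ P, (l ∩ segment ℝ ((0 : ℝ), (0 : ℝ)) q).Nonempty ∧ χ q = true) ∧
      (∃ q ∈ P, (l ∩ segment ℝ ((0 : ℝ), (0 : ℝ)) q).Nonempty ∧ χ q = false) := by
  intro l hl hcard
  obtain ⟨h, hh, hhP⟩ :=
    hl.exists_isHalfPlane_inter_eq P (Set.finite_of_ncard_pos (by omega))
  rw [← hhP] at hcard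
  obtain ⟨⟨q, hq, hχq⟩, ⟨q', hq', hχq'⟩⟩ := hχ h hh hcard
  rw [hhP] at hq hq'
  exact ⟨⟨q, hq.1, hq.2, hχq⟩, ⟨q', hq'.1, hq'.2, hχq'⟩⟩

/-- Reduction via polar duality when the origin is uncovered: if `H` is a finite
family of closed half-planes avoiding the origin, `P` is the set of polar duals
of their boundary lines (each such half-plane being `{p : q·p ≥ 1}` for its dual
point `q`), and the points of `P` can be 2-colored so that every closed
half-plane containing at least three of them contains both colors, then coloring
each segment `0q` (`q ∈ P`) with the color of `q` yields a coloring such that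
every line meeting at least three of these segments meets segments of both
colors. -/
theorem polar_duality_reduction
    (H : Set (Set (ℝ × ℝ))) (hfin : H.Finite) (hH : ∀ h ∈ H, IsHalfPlane h)
    (ho : ∀ h ∈ H, ((0 : ℝ), (0 : ℝ)) ∉ h)
    (P : Set (ℝ × ℝ))
    (hP : P = {q : ℝ × ℝ | ∃ h ∈ H, h = {p : ℝ × ℝ | 1 ≤ q.1 * p.1 + q.2 * p.2}})
    (χ : ℝ × ℝ → Bool)
    (hχ : ∀ h : Set (ℝ × ℝ), IsHalfPlane h → 3 ≤ (h ∩ P).ncard →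
      (∃ q ∈ h ∩ P, χ q = true) ∧ (∃ q ∈ h ∩ P, χ q = false)) :
    ∀ l : Set (ℝ × ℝ), IsLine l →
      3 ≤ {q ∈ P | (l ∩ segment ℝ ((0 : ℝ), (0 : ℝ)) q).Nonempty}.ncard →
      (∃ q ∈ P, (l ∩ segment ℝ ((0 : ℝ), (0 : ℝ)) q).Nonempty ∧ χ q = true) ∧
      (∃ q ∈ P, (l ∩ segment ℝ ((0 : ℝ), (0 : ℝ)) q).Nonempty ∧ χ q = false) :=
  polar_duality_reduction_general P χ hχ
end

section
/- Every non-vertical line intersects either a downward ray from a vertex of the upper hull of P_U or an upward ray from a vertex of the lower hull of P_L, provided the upper convex hull of P_U intersects the lower convex hull of P_L. In other words, if the corresponding family of half-planes covers the plane, then every non-vertical line meets at least one dual ray. -/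
/-- `q` is a vertex of the upper convex hull of `P`. -/
def UpHullVertex (P : Set (ℝ × ℝ)) (q : ℝ × ℝ) : Prop :=
  q ∈ P ∧ ∃ m k : ℝ, q.2 = m * q.1 + k ∧ ∀ u ∈ P, u.2 ≤ m * u.1 + k

/-- `q` is a vertex of the lower convex hull of `P`. -/
def LowHullVertex (P : Set (ℝ × ℝ)) (q : ℝ × ℝ) : Prop :=
  q ∈ P ∧ ∃ m k : ℝ, q.2 = m * q.1 + k ∧ ∀ u ∈ P, m * u.1 + k ≤ u.2

/-!
Fix the slope `m` and measure points by their intercept `x.2 - m * x.1`. This functional is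
linear and grows upwards, so the upper hull of `P_U` lies below its maximum `A` over `P_U` and the
lower hull of `P_L` above its minimum `B` over `P_L`; as the hulls meet, `B ≤ A`. A maximiser and
a minimiser are hull vertices, supported by lines of slope `m`. The line of intercept `k` meets the
downward ray from the maximiser when `k ≤ A` and the upward ray from the minimiser when `B ≤ k`.
-/

def intercept (m : ℝ) (x : ℝ × ℝ) : ℝ :=
  x.2 - m * x.1

lemma isLinearMap_intercept (m : ℝ) : IsLinearMap ℝ (intercept m) where
  map_add x y := by simp only [intercept, Prod.fst_add, Prod.snd_add]; ring
  map_smul c x := by simp only [intercept, Prod.smul_fst, Prod.smul_snd, smul_eq_mul]; ring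

lemma intercept_vertical_shift (m t : ℝ) (p : ℝ × ℝ) :
    intercept m (p + t • ((0 : ℝ), (1 : ℝ))) = intercept m p + t := by
  simp only [intercept, Prod.fst_add, Prod.snd_add, Prod.smul_mk, smul_eq_mul]; ring

lemma upHullVertex_of_forall_intercept_le {P : Set (ℝ × ℝ)} {a : ℝ × ℝ} {m : ℝ} (ha : a ∈ P)
    (hmax : ∀ u ∈ P, intercept m u ≤ intercept m a) : UpHullVertex P a :=
  ⟨ha, m, intercept m a, by simp only [intercept]; ring, fun u hu => by
    have := hmax u hu; simp only [intercept] at this ⊢; linarith⟩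

lemma lowHullVertex_of_forall_le_intercept {P : Set (ℝ × ℝ)} {b : ℝ × ℝ} {m : ℝ} (hb : b ∈ P)
    (hmin : ∀ u ∈ P, intercept m b ≤ intercept m u) : LowHullVertex P b :=
  ⟨hb, m, intercept m b, by simp only [intercept]; ring, fun u hu => by
    have := hmin u hu; simp only [intercept] at this ⊢; linarith⟩

lemma uphull_subset_intercept_le {P : Set (ℝ × ℝ)} {m c : ℝ}
    (h : ∀ p ∈ P, intercept m p ≤ c) : uphull P ⊆ {x | intercept m x ≤ c} := by
  refine convexHull_min ?_ (convex_halfSpace_le (isLinearMap_intercept m) c)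
  rintro _ ⟨p, hp, t, ht, rfl⟩
  have hshift := intercept_vertical_shift m (-t) p
  rw [neg_smul, ← sub_eq_add_neg] at hshift
  simp only [Set.mem_ofPred_eq, hshift]
  linarith [h p hp]

lemma lowhull_subset_le_intercept {P : Set (ℝ × ℝ)} {m c : ℝ}
    (h : ∀ p ∈ P, c ≤ intercept m p) : lowhull P ⊆ {x | c ≤ intercept m x} := by
  refine convexHull_min ?_ (convex_halfSpace_ge (isLinearMap_intercept m) c)
  rintro _ ⟨p, hp, t, ht, rfl⟩
  simp only [Set.mem_ofPred_eq, intercept_vertical_shift]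
  linarith [h p hp]

/-- If the upper hull of `P_U` meets the lower hull of `P_L`, then every
non-vertical line `y = mx + k` meets a downward ray at an upper-hull vertex of
`P_U` or an upward ray at a lower-hull vertex of `P_L`. -/
theorem every_line_meets_some_ray
    (PU PL : Set (ℝ × ℝ)) (hU : PU.Finite) (hL : PL.Finite)
    (hUne : PU.Nonempty) (hLne : PL.Nonempty)
    (hint : (uphull PU ∩ lowhull PL).Nonempty) :
    ∀ m k : ℝ,
      (∃ q : ℝ × ℝ, UpHullVertex PU q ∧ m * q.1 + k ≤ q.2) ∨
      (∃ q : ℝ × ℝ, LowHullVertex PL q ∧ q.2 ≤ m * q.1 + k) := by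
  intro m k
  obtain ⟨a, haU, hmax⟩ := Set.exists_max_image PU (intercept m) hU hUne
  obtain ⟨b, hbL, hmin⟩ := Set.exists_min_image PL (intercept m) hL hLne
  obtain ⟨x, hxU, hxL⟩ := hint
  have hba : intercept m b ≤ intercept m a :=
    (lowhull_subset_le_intercept hmin hxL).trans (uphull_subset_intercept_le hmax hxU)
  rcases le_or_gt k (intercept m a) with hka | hak
  · left
    refine ⟨a, upHullVertex_of_forall_intercept_le haU hmax, ?_⟩
    simp only [intercept] at hka
    linarith
  · right
    refine ⟨b, lowHullVertex_of_forall_le_intercept hbL hmin, ?_⟩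
    simp only [intercept] at hba hak
    linarith
end

section
/- Separated-hulls coloring (Observation on separated configurations): let P_U, P_L ⊆ ℝ² be finite with all x-coordinates distinct, p the rightmost point of P_U, q the leftmost point of P_L, p.x < q.x. Suppose the line l through p and its predecessor l_U on the upper hull of P_U passes strictly above q and does not meet the segment from q to q's successor r_L on the lower hull of P_L, and the line l' through q and r_L passes strictly below p and does not meet the segment l_U p. Then the coloring assigning blue to p and to all points of P_L to the right of q, and red to q and all points of P_U to the left of p, is good: every non-vertical line intersecting at least three of the associated vertical rays (downward at points of P_U, upward at points of P_L) intersects rays of both colors. -/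
/-!
The line `ℓ` through `l_U` and `p` supports `P_U` from above: a point of `P_U` strictly above `ℓ`
would make a point of `P_U` of maximal height over `ℓ` an upper-hull vertex strictly between
`l_U` and `p`. As `ℓ` passes above `q` and misses the segment `q r_L`, it also passes strictly
above `r_L`. Hence a line that passes above `p` but meets the ray of another point of `P_U` crosses
`ℓ` upwards left of `p` and so meets the (blue) ray at `r_L`. Symmetrically, with the line through
`q` and `r_L`, a line that passes below `q` but meets the ray of another point of `P_L` meets the
(red) ray at `l_U`. Among three met rays one belongs to neither `p` nor `q`, and either it has the
required colour or it triggers one of these two arguments.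
-/

open scoped Pointwise

theorem upHullVertex_neg_iff {P : Set (ℝ × ℝ)} {a : ℝ × ℝ} :
    UpHullVertex (-P) a ↔ LowHullVertex P (-a) := by
  simp only [UpHullVertex, LowHullVertex, Set.mem_neg, Prod.fst_neg, Prod.snd_neg]
  constructor
  · rintro ⟨ha, m, k, hak, hP⟩
    refine ⟨ha, m, -k, by linarith, fun u hu => ?_⟩
    have := hP (-u) (by rwa [neg_neg])
    simp only [Prod.fst_neg, Prod.snd_neg] at this
    linarith
  · rintro ⟨ha, m, k, hak, hP⟩
    refine ⟨ha, m, -k, by linarith, fun u hu => ?_⟩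
    have := hP (-u) hu
    simp only [Prod.fst_neg, Prod.snd_neg] at this
    linarith

theorem forall_sub_mul_le_of_upHull_pred {P : Set (ℝ × ℝ)} (hP : P.Finite)
    (hinj : P.InjOn Prod.fst) {p a : ℝ × ℝ} (hp : p ∈ P) (hpmax : ∀ u ∈ P, u.1 ≤ p.1)
    (ha : UpHullVertex P a) (hap : a.1 < p.1)
    (hpred : ∀ u, UpHullVertex P u → a.1 < u.1 → u.1 < p.1 → False)
    {s : ℝ} (hline : a.2 - s * a.1 = p.2 - s * p.1) :
    ∀ u ∈ P, u.2 - s * u.1 ≤ p.2 - s * p.1 := by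
  by_contra! h
  obtain ⟨u, hu, hpu⟩ := h
  obtain ⟨w, hw, hmax⟩ := Set.exists_max_image P (fun u => u.2 - s * u.1) hP ⟨u, hu⟩
  have hpw : p.2 - s * p.1 < w.2 - s * w.1 := hpu.trans_le (hmax u hu)
  have hwV : UpHullVertex P w :=
    ⟨hw, s, w.2 - s * w.1, by ring, fun v hv => by linarith [hmax v hv]⟩
  have hwp : w.1 < p.1 := (hpmax w hw).lt_of_ne fun h => by
    rw [hinj hw hp h] at hpw; exact hpw.false
  rcases lt_trichotomy a.1 w.1 with haw | haw | hwa
  · exact hpred w hwV haw hwp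
  · rw [← hinj ha.1 hw haw] at hpw; linarith
  · -- `p` lies below the support line at `a`, so that line is at least as steep as `ℓ`
    -- and, left of `a`, keeps `w` below `ℓ`.
    obtain ⟨-, m, k, hak, hsupp⟩ := ha
    have hsm : s ≤ m := by nlinarith [hsupp p hp]
    nlinarith [hsupp w hw]

theorem forall_le_sub_mul_of_lowHull_succ {P : Set (ℝ × ℝ)} (hP : P.Finite)
    (hinj : P.InjOn Prod.fst) {q b : ℝ × ℝ} (hq : q ∈ P) (hqmin : ∀ v ∈ P, q.1 ≤ v.1)
    (hb : LowHullVertex P b) (hqb : q.1 < b.1)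
    (hsucc : ∀ v, LowHullVertex P v → q.1 < v.1 → v.1 < b.1 → False)
    {s : ℝ} (hline : b.2 - s * b.1 = q.2 - s * q.1) :
    ∀ v ∈ P, q.2 - s * q.1 ≤ v.2 - s * v.1 := by
  have hneg := forall_sub_mul_le_of_upHull_pred (P := -P) (p := -q) (a := -b) (s := s) hP.neg
    (fun u hu v hv h => neg_injective (hinj hu hv (by simpa using h)))
    (Set.neg_mem_neg.mpr hq) (fun u hu => by simpa [le_neg] using hqmin (-u) hu)
    (upHullVertex_neg_iff.mpr (by simpa using hb)) (by simpa using hqb)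
    (fun u hu h₁ h₂ => hsucc (-u) (upHullVertex_neg_iff.mp hu) (by simpa [lt_neg] using h₂)
      (by simpa [neg_lt] using h₁))
    (by simp only [Prod.fst_neg, Prod.snd_neg]; linarith)
  intro v hv
  have := hneg (-v) (Set.neg_mem_neg.mpr hv)
  simp only [Prod.fst_neg, Prod.snd_neg] at this
  linarith

theorem lt_zero_of_forall_mem_segment_ne {E : Type*} [AddCommGroup E] [Module ℝ E]
    [TopologicalSpace E] [IsTopologicalAddGroup E] [ContinuousSMul ℝ E]
    {f : E → ℝ} (hf : Continuous f) {a b : E} (ha : f a < 0)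
    (hab : ∀ x ∈ segment ℝ a b, f x ≠ 0) : f b < 0 := by
  by_contra! hb
  obtain ⟨x, hx, hfx⟩ := (convex_segment a b).isPreconnected.intermediate_value
    (left_mem_segment ℝ a b) (right_mem_segment ℝ a b) hf.continuousOn ⟨ha.le, hb⟩
  exact hab x hx hfx

theorem snd_lt_of_crossing_right {p u r : ℝ × ℝ} {s m k : ℝ} (hup : u.1 < p.1) (hpr : p.1 < r.1)
    (hu : u.2 - s * u.1 ≤ p.2 - s * p.1) (hr : r.2 - s * r.1 < p.2 - s * p.1)
    (hp : p.2 < m * p.1 + k) (hum : m * u.1 + k ≤ u.2) : r.2 < m * r.1 + k := by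
  have hsm : s < m := by nlinarith
  nlinarith

theorem lt_snd_of_crossing_left {q v l : ℝ × ℝ} {s m k : ℝ} (hlq : l.1 < q.1) (hqv : q.1 < v.1)
    (hv : q.2 - s * q.1 ≤ v.2 - s * v.1) (hl : q.2 - s * q.1 < l.2 - s * l.1)
    (hq : m * q.1 + k < q.2) (hvm : v.2 ≤ m * v.1 + k) : m * l.1 + k < l.2 := by
  have hsm : s < m := by nlinarith
  nlinarith

theorem Set.exists_mem_ne_ne_of_three_le_ncard {α : Type*} {S : Set α} (hS : 3 ≤ S.ncard)
    (a b : α) : ∃ x ∈ S, x ≠ a ∧ x ≠ b := by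
  obtain ⟨x, hxS, hx⟩ := Set.exists_mem_notMem_of_ncard_lt_ncard
    (((Set.ncard_insert_le a {b}).trans_lt (by simp)).trans_le hS)
  exact ⟨x, hxS, by simpa [not_or] using hx⟩

/-- Separated-hulls coloring: with `p` the rightmost point of `P_U`, `q` the
leftmost point of `P_L`, `p.1 < q.1`, `l_U` the upper-hull predecessor of `p`,
`r_L` the lower-hull successor of `q`, assume the line through `l_U, p` passes
strictly above `q` and misses the segment `q r_L`, and the line through
`q, r_L` passes strictly below `p` and misses the segment `l_U p`. Then the
coloring which is blue on `p` and points of `P_L` right of `q`, and red on `q`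
and points of `P_U` left of `p`, is good: every non-vertical line meeting at
least three of the associated vertical rays (downward at `P_U`, upward at
`P_L`) meets rays of both colors. -/
theorem separated_hulls_coloring
    (PU PL : Set (ℝ × ℝ)) (hU : PU.Finite) (hL : PL.Finite)
    (hx : ∀ u ∈ PU ∪ PL, ∀ v ∈ PU ∪ PL, u ≠ v → u.1 ≠ v.1)
    (p q lU rL : ℝ × ℝ)
    (hpU : p ∈ PU) (hqL : q ∈ PL)
    (hpmax : ∀ u ∈ PU, u.1 ≤ p.1) (hqmin : ∀ v ∈ PL, q.1 ≤ v.1)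
    (hpq : p.1 < q.1)
    (hlU : UpHullVertex PU lU) (hlUp : lU.1 < p.1)
    (hlUpred : ∀ u : ℝ × ℝ, UpHullVertex PU u → lU.1 < u.1 → u.1 < p.1 → False)
    (hrL : LowHullVertex PL rL) (hqrL : q.1 < rL.1)
    (hrLsucc : ∀ v : ℝ × ℝ, LowHullVertex PL v → q.1 < v.1 → v.1 < rL.1 → False)
    (hlAbove : q.2 < (p.2 - lU.2) / (p.1 - lU.1) * (q.1 - p.1) + p.2)
    (hlMiss : ∀ x ∈ segment ℝ q rL, x.2 ≠ (p.2 - lU.2) / (p.1 - lU.1) * (x.1 - p.1) + p.2)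
    (hl'Below : (rL.2 - q.2) / (rL.1 - q.1) * (p.1 - q.1) + q.2 < p.2)
    (hl'Miss : ∀ x ∈ segment ℝ lU p, x.2 ≠ (rL.2 - q.2) / (rL.1 - q.1) * (x.1 - q.1) + q.2)
    (χ : ℝ × ℝ → Bool)
    (hχp : χ p = true) (hχq : χ q = false)
    (hχL : ∀ v ∈ PL, q.1 < v.1 → χ v = true)
    (hχU : ∀ u ∈ PU, u.1 < p.1 → χ u = false) :
    ∀ m k : ℝ,
      3 ≤ ({u ∈ PU | m * u.1 + k ≤ u.2} ∪ {v ∈ PL | v.2 ≤ m * v.1 + k}).ncard →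
      (∃ x, ((x ∈ PU ∧ m * x.1 + k ≤ x.2) ∨ (x ∈ PL ∧ x.2 ≤ m * x.1 + k)) ∧ χ x = true) ∧
      (∃ x, ((x ∈ PU ∧ m * x.1 + k ≤ x.2) ∨ (x ∈ PL ∧ x.2 ≤ m * x.1 + k)) ∧ χ x = false) := by
  intro m k hmet
  set s := (p.2 - lU.2) / (p.1 - lU.1) with hs
  set s' := (rL.2 - q.2) / (rL.1 - q.1) with hs'
  have hinj : (PU ∪ PL).InjOn Prod.fst := fun u hu v hv h =>
    by_contra fun hne => hx u hu v hv hne h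
  have hpx : ∀ u ∈ PU, u ≠ p → u.1 < p.1 := fun u hu hne =>
    (hpmax u hu).lt_of_ne ((hinj.ne_iff (.inl hu) (.inl hpU)).mpr hne)
  have hqx : ∀ v ∈ PL, v ≠ q → q.1 < v.1 := fun v hv hne =>
    (hqmin v hv).lt_of_ne ((hinj.ne_iff (.inr hqL) (.inr hv)).mpr hne.symm)
  have hUsupp : ∀ u ∈ PU, u.2 - s * u.1 ≤ p.2 - s * p.1 :=
    forall_sub_mul_le_of_upHull_pred hU (hinj.mono Set.subset_union_left) hpU hpmax hlU hlUp
      hlUpred (by rw [hs]; field_simp [(sub_pos.mpr hlUp).ne']; ring)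
  have hLsupp : ∀ v ∈ PL, q.2 - s' * q.1 ≤ v.2 - s' * v.1 :=
    forall_le_sub_mul_of_lowHull_succ hL (hinj.mono Set.subset_union_right) hqL hqmin hrL hqrL
      hrLsucc (by rw [hs']; field_simp [(sub_pos.mpr hqrL).ne']; ring)
  have hrL_below : rL.2 - s * rL.1 < p.2 - s * p.1 := by
    have := lt_zero_of_forall_mem_segment_ne (f := fun x => x.2 - (s * (x.1 - p.1) + p.2))
      (by fun_prop) (by linarith) fun x hx => sub_ne_zero.mpr (hlMiss x hx)
    linarith
  have hlU_above : q.2 - s' * q.1 < lU.2 - s' * lU.1 := by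
    have := lt_zero_of_forall_mem_segment_ne (f := fun x => s' * (x.1 - q.1) + q.2 - x.2)
      (by fun_prop) (by linarith)
      fun x hx => sub_ne_zero.mpr (hl'Miss x (segment_symm ℝ lU p ▸ hx)).symm
    linarith
  obtain ⟨x, hxmet, hxp, hxq⟩ := Set.exists_mem_ne_ne_of_three_le_ncard hmet p q
  refine ⟨?_, ?_⟩
  · by_cases hp : m * p.1 + k ≤ p.2
    · exact ⟨p, .inl ⟨hpU, hp⟩, hχp⟩
    rcases hxmet with ⟨hxU, hxm⟩ | ⟨hxL, hxm⟩
    · exact ⟨rL, .inr ⟨hrL.1, (snd_lt_of_crossing_right (hpx x hxU hxp) (hpq.trans hqrL)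
        (hUsupp x hxU) hrL_below (not_le.mp hp) hxm).le⟩, hχL rL hrL.1 hqrL⟩
    · exact ⟨x, .inr ⟨hxL, hxm⟩, hχL x hxL (hqx x hxL hxq)⟩
  · by_cases hq : q.2 ≤ m * q.1 + k
    · exact ⟨q, .inr ⟨hqL, hq⟩, hχq⟩
    rcases hxmet with ⟨hxU, hxm⟩ | ⟨hxL, hxm⟩
    · exact ⟨x, .inl ⟨hxU, hxm⟩, hχU x hxU (hpx x hxU hxp)⟩
    · exact ⟨lU, .inl ⟨hlU.1, (lt_snd_of_crossing_left (hlUp.trans hpq) (hqx x hxL hxq)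
        (hLsupp x hxL) hlU_above (not_le.mp hq) hxm).le⟩, hχU lU hlU.1 hlUp⟩
end
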